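/- arXiv:2207.13912 — 7 statements merged into one kernel-verified Lean document; each statement's English description precedes it below -/
import Mathlib

section
/- In a symmetric monoidal closed category, an object A is reflexive (j_A : A → A** is an isomorphism) if and only if (A, A*, ev_{A,I}) is, up to composing with an isomorphism in the second component, a dual pairing; more precisely: if A is reflexive then (A, A*, ev_{A,I}) is a dual pairing, and (A, B) is a dual pair if and only if A is reflexive and B ≅ A*. -/
open CategoryTheory MonoidalCategory MonoidalClosed

variable {C : Type*} [Category C] [MonoidalCategory C] [SymmetricCategory C] [MonoidalClosed C]

/-- `ε : A ⊗ B ⟶ N` is a dual pairing (w.r.t. the fixed object `N`). -/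
def IsDualPairing (N : C) {A B : C} (ε : A ⊗ B ⟶ N) : Prop :=
  (∀ X : C, Function.Bijective (fun f : X ⟶ B => (A ◁ f) ≫ ε)) ∧
  (∀ X : C, Function.Bijective (fun g : X ⟶ A => (g ▷ B) ≫ ε))

/-- The canonical map `j_X : X ⟶ X**`, transpose of `ev_{X,N} ∘ σ_{X*,X}`. -/
noncomputable def jmap (N X : C) : X ⟶ (ihom ((ihom X).obj N)).obj N :=
  MonoidalClosed.curry ((β_ ((ihom X).obj N) X).hom ≫ (ihom.ev X).app N)

/-- The currying equivalence as an `Equiv`. -/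
noncomputable def uncurryEquiv (N A X : C) : (X ⟶ (ihom A).obj N) ≃ (A ⊗ X ⟶ N) where
  toFun := MonoidalClosed.uncurry
  invFun := MonoidalClosed.curry
  left_inv f := MonoidalClosed.curry_uncurry f
  right_inv f := MonoidalClosed.uncurry_curry f

lemma curry_ev (N A : C) : MonoidalClosed.curry ((ihom.ev A).app N) = 𝟙 _ := by
  rw [← MonoidalClosed.uncurry_id_eq_ev, MonoidalClosed.curry_uncurry]

/-- Key identity: the "other transpose" of `ε` factors as `j_A` followed by
`pre (curry ε)`. -/
lemma key (N A B : C) (ε : A ⊗ B ⟶ N) :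
    MonoidalClosed.curry ((β_ B A).hom ≫ ε) =
      jmap N A ≫ (MonoidalClosed.pre (MonoidalClosed.curry ε)).app N := by
  apply MonoidalClosed.uncurry_injective
  rw [MonoidalClosed.uncurry_curry, MonoidalClosed.uncurry_natural_left,
    MonoidalClosed.uncurry_pre, whisker_exchange_assoc]
  have h1 : ((ihom A).obj N : C) ◁ jmap N A ≫ (ihom.ev ((ihom A).obj N)).app N
      = (β_ ((ihom A).obj N) A).hom ≫ (ihom.ev A).app N := by
    rw [← MonoidalClosed.uncurry_eq, jmap, MonoidalClosed.uncurry_curry]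
  rw [h1, BraidedCategory.braiding_naturality_left_assoc, ← MonoidalClosed.uncurry_eq,
    MonoidalClosed.uncurry_curry]

lemma cond1_iff (N A B : C) (ε : A ⊗ B ⟶ N) :
    (∀ X : C, Function.Bijective (fun f : X ⟶ B => (A ◁ f) ≫ ε)) ↔
      IsIso (MonoidalClosed.curry ε) := by
  rw [isIso_iff_yoneda_map_bijective]
  apply forall_congr'
  intro X
  have h : (fun f : X ⟶ B => (A ◁ f) ≫ ε)
      = (uncurryEquiv N A X) ∘ (fun f : X ⟶ B => f ≫ MonoidalClosed.curry ε) := by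
    funext f
    simp only [Function.comp_apply, uncurryEquiv, Equiv.coe_fn_mk]
    rw [MonoidalClosed.uncurry_natural_left, MonoidalClosed.uncurry_curry]
  rw [h]
  exact ⟨fun hb => ((uncurryEquiv N A X).comp_bijective _).mp hb,
    fun hb => ((uncurryEquiv N A X).comp_bijective _).mpr hb⟩

lemma cond2_iff (N A B : C) (ε : A ⊗ B ⟶ N) :
    (∀ X : C, Function.Bijective (fun g : X ⟶ A => (g ▷ B) ≫ ε)) ↔
      IsIso (MonoidalClosed.curry ((β_ B A).hom ≫ ε)) := by
  rw [isIso_iff_yoneda_map_bijective]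
  apply forall_congr'
  intro X
  let e : (B ⊗ X ⟶ N) ≃ (X ⊗ B ⟶ N) :=
    { toFun := fun h => (β_ X B).hom ≫ h
      invFun := fun h => (β_ X B).inv ≫ h
      left_inv := fun h => by simp
      right_inv := fun h => by simp }
  have h : (fun g : X ⟶ A => (g ▷ B) ≫ ε)
      = e ∘ (uncurryEquiv N B X) ∘
          (fun g : X ⟶ A => g ≫ MonoidalClosed.curry ((β_ B A).hom ≫ ε)) := by
    funext g
    simp only [Function.comp_apply, uncurryEquiv, Equiv.coe_fn_mk, e]
    rw [MonoidalClosed.uncurry_natural_left, MonoidalClosed.uncurry_curry,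
      ← BraidedCategory.braiding_naturality_left_assoc, SymmetricCategory.symmetry_assoc]
  rw [h]
  constructor
  · intro hb
    have := (e.comp_bijective _).mp hb
    exact ((uncurryEquiv N B X).comp_bijective _).mp this
  · intro hb
    exact (e.comp_bijective _).mpr (((uncurryEquiv N B X).comp_bijective _).mpr hb)

lemma isIso_pre {A B : C} (f : B ⟶ A) [IsIso f] : IsIso (MonoidalClosed.pre (C := C) f) := by
  refine ⟨MonoidalClosed.pre (inv f), ?_, ?_⟩
  · rw [← MonoidalClosed.pre_map, IsIso.inv_hom_id, MonoidalClosed.pre_id]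
  · rw [← MonoidalClosed.pre_map, IsIso.hom_inv_id, MonoidalClosed.pre_id]

lemma dualPairing_iff (N A B : C) (ε : A ⊗ B ⟶ N) :
    IsDualPairing N ε ↔
      IsIso (MonoidalClosed.curry ε) ∧
        IsIso (jmap N A ≫ (MonoidalClosed.pre (MonoidalClosed.curry ε)).app N) := by
  rw [IsDualPairing, cond1_iff, cond2_iff, key]

/-- if `A` is reflexive then `(A, A*, ev_{A,N})` is a dual pairing;
and `(A, B)` is a dual pair iff `A` is reflexive and `B ≅ A*`. -/
theorem reflexive_dualPairing_characterisation (N A B : C) :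
    (IsIso (jmap N A) → IsDualPairing N ((ihom.ev A).app N)) ∧
    ((∃ ε : A ⊗ B ⟶ N, IsDualPairing N ε) ↔
      (IsIso (jmap N A) ∧ Nonempty (B ≅ (ihom A).obj N))) := by
  constructor
  · intro hj
    rw [dualPairing_iff, curry_ev]
    refine ⟨inferInstance, ?_⟩
    rw [MonoidalClosed.pre_id, NatTrans.id_app, Category.comp_id]
    exact hj
  · constructor
    · rintro ⟨ε, hε⟩
      rw [dualPairing_iff] at hε
      obtain ⟨h1, h2⟩ := hε
      haveI := h1
      haveI : IsIso (MonoidalClosed.pre (MonoidalClosed.curry ε)) := isIso_pre _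
      haveI : IsIso ((MonoidalClosed.pre (MonoidalClosed.curry ε)).app N) :=
        inferInstance
      haveI := h2
      have hjiso : IsIso (jmap N A) :=
        IsIso.of_isIso_comp_right (jmap N A)
          ((MonoidalClosed.pre (MonoidalClosed.curry ε)).app N)
      exact ⟨hjiso, ⟨asIso (MonoidalClosed.curry ε)⟩⟩
    · rintro ⟨hj, ⟨e⟩⟩
      refine ⟨(A ◁ e.hom) ≫ (ihom.ev A).app N, ?_⟩
      rw [dualPairing_iff]
      have hc : MonoidalClosed.curry ((A ◁ e.hom) ≫ (ihom.ev A).app N) = e.hom := by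
        rw [MonoidalClosed.curry_natural_left, curry_ev, Category.comp_id]
      rw [hc]
      haveI : IsIso (MonoidalClosed.pre e.hom) := isIso_pre _
      haveI := hj
      exact ⟨inferInstance, inferInstance⟩
end

section
/- Let (A, B, ε) be a dual pairing where (A, μ_A) is a semigroup, and let ⊸ˡ : A ⊗ B → B and ⊸ʳ : B ⊗ A → B be the left and right actions defined by ε ∘ (A ⊗ ⊸ˡ) = ε ∘ (μ_A ⊗ B) and ε ∘ (A ⊗ ⊸ʳ) = ε ∘ ((μ_A ∘ σ) ⊗ B), the latter up to the canonical associativity and symmetry rearrangement of the tensor factors. Then ⊸ˡ is a left action of (A, μ_A) on B and ⊸ʳ is a right action, and the two actions are equivariant: ⊸ˡ ∘ (A ⊗ ⊸ʳ) = ⊸ʳ ∘ (⊸ˡ ⊗ A). -/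
open CategoryTheory MonoidalCategory

variable {C : Type*} [Category C] [MonoidalCategory C] [SymmetricCategory C]

/-- the defining equation of the left action `⊸ˡ : A ⊗ B ⟶ B` of a magma
`(A, μ)` on its dual `B`: `ε ∘ (A ⊗ ⊸ˡ) = ε ∘ (μ ⊗ B)` (modulo associators). -/
def LactSpec (N : C) {A B : C} (ε : A ⊗ B ⟶ N) (μ : A ⊗ A ⟶ A)
    (lact : A ⊗ B ⟶ B) : Prop :=
  (A ◁ lact) ≫ ε = (α_ A A B).inv ≫ (μ ▷ B) ≫ ε

/-- the defining equation of the right action `⊸ʳ : B ⊗ A ⟶ B`: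
`ε ∘ (A ⊗ ⊸ʳ) = ε ∘ ((μ ∘ σ_{A,A}) ⊗ B) ∘ (symmetry A⊗B⊗A → A⊗A⊗B)`. -/
def RactSpec (N : C) {A B : C} (ε : A ⊗ B ⟶ N) (μ : A ⊗ A ⟶ A)
    (ract : B ⊗ A ⟶ B) : Prop :=
  (A ◁ ract) ≫ ε =
    (A ◁ (β_ B A).hom) ≫ (α_ A A B).inv ≫ (((β_ A A).hom ≫ μ) ▷ B) ≫ ε

/-- A Frobenius structure `(A, B, ε, μ, l, r)` (with the actions `lact`, `ract`
made explicit): `(A, B, ε)` is a dual pairing, `(A, μ)` is a semigroup, `l` and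
`r` are invertible adjoint maps, and the contraposition law
`⊸ˡ ∘ (A ⊗ r) = ⊸ʳ ∘ (l ⊗ A)` holds. -/
def IsFrobenius (N : C) {A B : C} (ε : A ⊗ B ⟶ N) (μ : A ⊗ A ⟶ A)
    (l r : A ⟶ B) (lact : A ⊗ B ⟶ B) (ract : B ⊗ A ⟶ B) : Prop :=
  IsDualPairing N ε ∧
  ((μ ▷ A) ≫ μ = (α_ A A A).hom ≫ (A ◁ μ) ≫ μ) ∧
  LactSpec N ε μ lact ∧ RactSpec N ε μ ract ∧
  IsIso l ∧ IsIso r ∧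
  ((A ◁ r) ≫ ε = (β_ A A).hom ≫ (A ◁ l) ≫ ε) ∧
  ((A ◁ r) ≫ lact = (l ▷ A) ≫ ract)

section Aux

open BraidedCategory

/-- auxiliary: structural identity used for the right-action law. -/
theorem aux_struct2 (A B : C) :
    (α_ B A A).hom ≫ (β_ B (A ⊗ A)).hom ≫ ((β_ A A).hom ▷ B) ≫ (α_ A A B).hom
      = ((β_ B A).hom ▷ A) ≫ (β_ (A ⊗ B) A).hom := by
  simp only [braiding_tensor_left_hom, braiding_tensor_right_hom]
  monoidal

/-- auxiliary: Yang–Baxter type structural identity. -/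
theorem aux_structnu (A : C) :
    (β_ (A ⊗ A) A).hom ≫ (A ◁ (β_ A A).hom)
      = (α_ A A A).hom ≫ (β_ A (A ⊗ A)).hom ≫ ((β_ A A).hom ▷ A) ≫ (α_ A A A).hom := by
  rw [braiding_tensor_left_hom, braiding_tensor_right_hom]
  simp only [Category.assoc]
  congr 1
  simpa using (yang_baxter A A A).symm

/-- auxiliary: the opposite multiplication of a semigroup is associative. -/
theorem aux_nu_assoc (A : C) (μ : A ⊗ A ⟶ A)
    (hμ : (μ ▷ A) ≫ μ = (α_ A A A).hom ≫ (A ◁ μ) ≫ μ) :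
    (((β_ A A).hom ≫ μ) ▷ A) ≫ (β_ A A).hom ≫ μ
      = (α_ A A A).hom ≫ (A ◁ ((β_ A A).hom ≫ μ)) ≫ (β_ A A).hom ≫ μ := by
  simp only [comp_whiskerRight, MonoidalCategory.whiskerLeft_comp, Category.assoc,
    braiding_naturality_left_assoc, braiding_naturality_right_assoc, hμ]
  rw [reassoc_of% aux_structnu A]

/-- auxiliary: the left-action law, from the defining spec. -/
theorem aux_lact_assoc (N : C) {A B : C} (ε : A ⊗ B ⟶ N)
    (hinj : ∀ X : C, Function.Injective (fun f : X ⟶ B => (A ◁ f) ≫ ε))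
    (μ : A ⊗ A ⟶ A) (hμ : (μ ▷ A) ≫ μ = (α_ A A A).hom ≫ (A ◁ μ) ≫ μ)
    (lact : A ⊗ B ⟶ B) (hl : LactSpec N ε μ lact) :
    (α_ A A B).inv ≫ (μ ▷ B) ≫ lact = (A ◁ lact) ≫ lact := by
  apply hinj
  show (A ◁ ((α_ A A B).inv ≫ (μ ▷ B) ≫ lact)) ≫ ε = (A ◁ ((A ◁ lact) ≫ lact)) ≫ ε
  unfold LactSpec at hl
  simp only [MonoidalCategory.whiskerLeft_comp, Category.assoc]
  rw [hl]
  rw [associator_inv_naturality_middle_assoc, associator_inv_naturality_right_assoc,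
    whisker_exchange_assoc, hl, associator_inv_naturality_left_assoc,
    ← comp_whiskerRight_assoc, ← comp_whiskerRight_assoc, hμ]
  simp only [comp_whiskerRight, Category.assoc]
  monoidal

/-- auxiliary: structural identity used for equivariance. -/
theorem aux_struct3 (A B : C) :
    (α_ A A (B ⊗ A)).inv ≫ ((A ⊗ A) ◁ (β_ B A).hom) ≫ (α_ (A ⊗ A) A B).inv ≫
        ((β_ (A ⊗ A) A).hom ▷ B)
      = (A ◁ (α_ A B A).inv) ≫ (A ◁ (β_ (A ⊗ B) A).hom) ≫ (α_ A A (A ⊗ B)).inv ≫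
        (α_ (A ⊗ A) A B).inv ≫ (((β_ A A).hom ▷ A) ▷ B) ≫ ((α_ A A A).hom ▷ B) := by
  simp only [braiding_tensor_left_hom, braiding_tensor_right_hom]
  monoidal

end Aux

/-- for a dual pairing `(A, B, ε)` with `(A, μ)` a semigroup, the
maps `⊸ˡ` and `⊸ʳ` are a left and a right action, and they are equivariant. -/
theorem actions_of_semigroup_on_dual (N : C) {A B : C} (ε : A ⊗ B ⟶ N)
    (hε : IsDualPairing N ε) (μ : A ⊗ A ⟶ A)
    (hμ : (μ ▷ A) ≫ μ = (α_ A A A).hom ≫ (A ◁ μ) ≫ μ)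
    (lact : A ⊗ B ⟶ B) (ract : B ⊗ A ⟶ B)
    (hl : LactSpec N ε μ lact) (hr : RactSpec N ε μ ract) :
    ((α_ A A B).inv ≫ (μ ▷ B) ≫ lact = (A ◁ lact) ≫ lact) ∧
    ((α_ B A A).hom ≫ (B ◁ μ) ≫ ract = (ract ▷ A) ≫ ract) ∧
    ((A ◁ ract) ≫ lact = (α_ A B A).inv ≫ (lact ▷ A) ≫ ract) := by
  open BraidedCategory in
  have hinj : ∀ X : C, Function.Injective (fun f : X ⟶ B => (A ◁ f) ≫ ε) :=
    fun X => (hε.1 X).1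
  unfold LactSpec at hl
  unfold RactSpec at hr
  -- the opposite multiplication and the "left action" form of `ract`
  set ν : A ⊗ A ⟶ A := (β_ A A).hom ≫ μ with hν
  have hνassoc : (ν ▷ A) ≫ ν = (α_ A A A).hom ≫ (A ◁ ν) ≫ ν := aux_nu_assoc A μ hμ
  set ℓ : A ⊗ B ⟶ B := (β_ B A).inv ≫ ract with hℓ
  have hract : ract = (β_ B A).hom ≫ ℓ := by simp [hℓ]
  have hℓspec : (A ◁ ℓ) ≫ ε = (α_ A A B).inv ≫ (ν ▷ B) ≫ ε := by
    rw [hℓ]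
    simp only [MonoidalCategory.whiskerLeft_comp, Category.assoc, hr]
    simp [← MonoidalCategory.whiskerLeft_comp_assoc]
  have hℓact : (α_ A A B).inv ≫ (ν ▷ B) ≫ ℓ = (A ◁ ℓ) ≫ ℓ :=
    aux_lact_assoc N ε hinj ν hνassoc ℓ hℓspec
  have hμν : μ = (β_ A A).hom ≫ ν := by simp [hν]
  refine ⟨aux_lact_assoc N ε hinj μ hμ lact hl, ?_, ?_⟩
  · -- right action law
    rw [hract]
    calc (α_ B A A).hom ≫ B ◁ μ ≫ (β_ B A).hom ≫ ℓ
        = (α_ B A A).hom ≫ (β_ B (A ⊗ A)).hom ≫ (μ ▷ B) ≫ ℓ := by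
          rw [braiding_naturality_right_assoc]
      _ = (α_ B A A).hom ≫ (β_ B (A ⊗ A)).hom ≫ ((β_ A A).hom ▷ B) ≫ (α_ A A B).hom ≫
            (A ◁ ℓ) ≫ ℓ := by
          rw [hμν, comp_whiskerRight_assoc, ← hℓact]
          simp
      _ = ((β_ B A).hom ▷ A) ≫ (β_ (A ⊗ B) A).hom ≫ (A ◁ ℓ) ≫ ℓ := by
          rw [reassoc_of% aux_struct2 A B]
      _ = ((β_ B A).hom ▷ A) ≫ (ℓ ▷ A) ≫ (β_ B A).hom ≫ ℓ := by
          rw [braiding_naturality_left_assoc ℓ A]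
      _ = (((β_ B A).hom ≫ ℓ) ▷ A) ≫ (β_ B A).hom ≫ ℓ := by simp
  · -- equivariance
    apply hinj
    show (A ◁ ((A ◁ ract) ≫ lact)) ≫ ε
        = (A ◁ ((α_ A B A).inv ≫ (lact ▷ A) ≫ ract)) ≫ ε
    simp only [MonoidalCategory.whiskerLeft_comp, Category.assoc]
    rw [hl, associator_inv_naturality_right_assoc, whisker_exchange_assoc, hr,
      ← whisker_exchange_assoc, associator_inv_naturality_left_assoc]
    -- now handle the RHS
    rw [← MonoidalCategory.whiskerLeft_comp_assoc A (lact ▷ A) (β_ B A).hom,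
      braiding_naturality_left lact A, MonoidalCategory.whiskerLeft_comp_assoc,
      associator_inv_naturality_right_assoc, whisker_exchange_assoc, hl,
      associator_inv_naturality_left_assoc]
    have step1 : (μ ▷ A) ≫ ν = (β_ (A ⊗ A) A).hom ≫ (A ◁ μ) ≫ μ := by
      rw [hν, braiding_naturality_left_assoc]
    have step2 : (ν ▷ A) ≫ μ
        = ((β_ A A).hom ▷ A) ≫ (α_ A A A).hom ≫ (A ◁ μ) ≫ μ := by
      rw [hν, comp_whiskerRight_assoc, hμ]
    rw [← comp_whiskerRight_assoc (μ ▷ A) ν, step1,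
      ← comp_whiskerRight_assoc (ν ▷ A) μ, step2]
    simp only [comp_whiskerRight, Category.assoc]
    rw [reassoc_of% aux_struct3 A B]
end

section
/- Let (A, B, ε) be a dual pairing, (A, μ_A) a semigroup, and l, r : A → B invertible adjoint maps. Then (A, B, ε, μ_A, l, r) is a Frobenius structure (the contraposition square ⊸ˡ ∘ (A ⊗ r) = ⊸ʳ ∘ (l ⊗ A) commutes) if and only if the shift equation ε ∘ (μ_A ⊗ r) = ε ∘ (μ_A ⊗ l) ∘ σ_{A⊗A, A} holds. -/
/-! Pair both sides of the contraposition law with `A` on the left. The defining equations of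
the two actions turn the two pairings into the two sides of the shift equation (the right action
contributing a hexagon), up to the same associator; since `ε` is nondegenerate, pairing with `A`
is injective, so the two equations are equivalent. -/

open CategoryTheory MonoidalCategory

variable {C : Type*} [Category C] [MonoidalCategory C] [SymmetricCategory C]

theorem IsDualPairing.whiskerLeft_comp_inj {C : Type*} [Category C] [MonoidalCategory C]
    {N A B : C} {ε : A ⊗ B ⟶ N}
    (hε : IsDualPairing N ε) {X : C} {f g : X ⟶ B} :
    (A ◁ f) ≫ ε = (A ◁ g) ≫ ε ↔ f = g :=
  ⟨fun h => (hε.1 X).injective h, fun h => h ▸ rfl⟩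

theorem LactSpec.pair_whiskerLeft_comp_lact {C : Type*} [Category C] [MonoidalCategory C]
    {N A B : C} {ε : A ⊗ B ⟶ N} {μ : A ⊗ A ⟶ A}
    {lact : A ⊗ B ⟶ B} (hl : LactSpec N ε μ lact) {X : C} (g : X ⟶ B) :
    (A ◁ ((A ◁ g) ≫ lact)) ≫ ε = (α_ A A X).inv ≫ (μ ⊗ₘ g) ≫ ε := by
  rw [whiskerLeft_comp, Category.assoc, hl, associator_inv_naturality_right_assoc,
    tensorHom_def', Category.assoc]

theorem RactSpec.pair_whiskerRight_comp_ract {N A B : C} {ε : A ⊗ B ⟶ N} {μ : A ⊗ A ⟶ A}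
    {ract : B ⊗ A ⟶ B} (hr : RactSpec N ε μ ract) {X : C} (f : X ⟶ B) :
    (A ◁ ((f ▷ A) ≫ ract)) ≫ ε =
      (α_ A X A).inv ≫ (β_ (A ⊗ X) A).hom ≫ (α_ A A X).inv ≫ (μ ⊗ₘ f) ≫ ε := by
  rw [whiskerLeft_comp, Category.assoc, hr, ← whiskerLeft_comp_assoc,
    BraidedCategory.braiding_naturality_left, whiskerLeft_comp_assoc,
    associator_inv_naturality_right_assoc]
  rw [BraidedCategory.hexagon_reverse_assoc, comp_whiskerRight_assoc, whisker_exchange_assoc,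
    tensorHom_def', Category.assoc]

theorem frobenius_iff_shift_general (N : C) {A B : C} (ε : A ⊗ B ⟶ N)
    (hε : IsDualPairing N ε) (μ : A ⊗ A ⟶ A)
    (lact : A ⊗ B ⟶ B) (ract : B ⊗ A ⟶ B)
    (hl : LactSpec N ε μ lact) (hr : RactSpec N ε μ ract)
    (l r : A ⟶ B) :
    ((A ◁ r) ≫ lact = (l ▷ A) ≫ ract) ↔
      ((μ ⊗ₘ r) ≫ ε =
        (β_ (A ⊗ A) A).hom ≫ (α_ A A A).inv ≫ (μ ⊗ₘ l) ≫ ε) := by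
  rw [← hε.whiskerLeft_comp_inj, hl.pair_whiskerLeft_comp_lact, hr.pair_whiskerRight_comp_ract]
  exact cancel_epi _

/-- for a dual pairing `(A, B, ε)`, a semigroup `(A, μ)`, and
invertible adjoint maps `l, r : A ⟶ B`, the contraposition square commutes iff
the shift equation `ε ∘ (μ ⊗ r) = ε ∘ (μ ⊗ l) ∘ σ_{A⊗A, A}` holds. -/
theorem frobenius_iff_shift (N : C) {A B : C} (ε : A ⊗ B ⟶ N)
    (hε : IsDualPairing N ε) (μ : A ⊗ A ⟶ A)
    (hμ : (μ ▷ A) ≫ μ = (α_ A A A).hom ≫ (A ◁ μ) ≫ μ)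
    (lact : A ⊗ B ⟶ B) (ract : B ⊗ A ⟶ B)
    (hl : LactSpec N ε μ lact) (hr : RactSpec N ε μ ract)
    (l r : A ⟶ B) (hli : IsIso l) (hri : IsIso r)
    (hadj : (A ◁ r) ≫ ε = (β_ A A).hom ≫ (A ◁ l) ≫ ε) :
    ((A ◁ r) ≫ lact = (l ▷ A) ≫ ract) ↔
      ((μ ⊗ₘ r) ≫ ε =
        (β_ (A ⊗ A) A).hom ≫ (α_ A A A).inv ≫ (μ ⊗ₘ l) ≫ ε) :=
  frobenius_iff_shift_general N ε hε μ lact ract hl hr l r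
end

section
/- If (A, B, ε, μ_A, l, r) is a Frobenius structure, then the multiplication μ_B := ⊸ʳ ∘ (B ⊗ r⁻¹) = ⊸ˡ ∘ (l⁻¹ ⊗ B) on B is associative, so (B, μ_B) is a semigroup. -/
open CategoryTheory MonoidalCategory

variable {C : Type*} [Category C] [MonoidalCategory C] [SymmetricCategory C]

/-!
Writing `μ_B` both as `⊸ʳ ∘ (B ⊗ r⁻¹)` and, by the contraposition law, as `⊸ˡ ∘ (l⁻¹ ⊗ B)`,
the two bracketings of a product `xyz` become `(l⁻¹x ⊸ˡ y) ⊸ʳ r⁻¹z` and `l⁻¹x ⊸ˡ (y ⊸ʳ r⁻¹z)`.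
These agree because the two actions commute, which in turn holds since both are transposes of
`μ` under the nondegenerate pairing `ε` and `μ` is associative.
-/

section Monoidal

variable {D : Type*} [Category D] [MonoidalCategory D]

theorem whiskerLeft_comp_ract_eq_whiskerRight_comp_lact {A B : D} {l r : A ⟶ B} {ri li : B ⟶ A}
    {lact : A ⊗ B ⟶ B} {ract : B ⊗ A ⟶ B} (hcontra : (A ◁ r) ≫ lact = (l ▷ A) ≫ ract)
    (hri : ri ≫ r = 𝟙 B) (hli : li ≫ l = 𝟙 B) :
    (B ◁ ri) ≫ ract = (li ▷ B) ≫ lact :=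
  calc (B ◁ ri) ≫ ract
      = (li ▷ B) ≫ (A ◁ ri) ≫ (l ▷ A) ≫ ract := by
        rw [← whisker_exchange_assoc, ← comp_whiskerRight_assoc, hli, id_whiskerRight,
          Category.id_comp]
    _ = (li ▷ B) ≫ (A ◁ ri) ≫ (A ◁ r) ≫ lact := by rw [hcontra]
    _ = (li ▷ B) ≫ lact := by
        rw [← whiskerLeft_comp_assoc, hri, whiskerLeft_id, Category.id_comp]

theorem mul_assoc_of_bimodule {A B : D} {lact : A ⊗ B ⟶ B} {ract : B ⊗ A ⟶ B}
    (hcomm : (A ◁ ract) ≫ lact = (α_ A B A).inv ≫ (lact ▷ A) ≫ ract)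
    {m : B ⊗ B ⟶ B} {ri li : B ⟶ A} (hmr : m = (B ◁ ri) ≫ ract) (hml : m = (li ▷ B) ≫ lact) :
    (m ▷ B) ≫ m = (α_ B B B).hom ≫ (B ◁ m) ≫ m :=
  calc (m ▷ B) ≫ m
      = ((li ▷ B) ▷ B) ≫ (lact ▷ B) ≫ (B ◁ ri) ≫ ract := by
        rw [hml, comp_whiskerRight, Category.assoc, ← hml, hmr]
    _ = ((li ▷ B) ▷ B) ≫ ((A ⊗ B) ◁ ri) ≫ (lact ▷ A) ≫ ract := by
        rw [whisker_exchange_assoc]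
    _ = (α_ B B B).hom ≫ (li ▷ (B ⊗ B)) ≫ (A ◁ (B ◁ ri)) ≫ (α_ A B A).inv ≫
          (lact ▷ A) ≫ ract := by
        rw [associator_inv_naturality_right_assoc, associator_inv_naturality_left_assoc,
          Iso.hom_inv_id_assoc]
    _ = (α_ B B B).hom ≫ (li ▷ (B ⊗ B)) ≫ (A ◁ m) ≫ lact := by
        rw [hmr, whiskerLeft_comp, Category.assoc, hcomm]
    _ = (α_ B B B).hom ≫ (B ◁ m) ≫ m := by
        rw [hml, whisker_exchange_assoc]

end Monoidal

theorem lact_ract_comm {N A B : C} {ε : A ⊗ B ⟶ N} {μ : A ⊗ A ⟶ A}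
    {lact : A ⊗ B ⟶ B} {ract : B ⊗ A ⟶ B}
    (hε : ∀ X : C, Function.Injective (fun f : X ⟶ B => (A ◁ f) ≫ ε))
    (hμ : (μ ▷ A) ≫ μ = (α_ A A A).hom ≫ (A ◁ μ) ≫ μ)
    (hl : LactSpec N ε μ lact) (hr : RactSpec N ε μ ract) :
    (A ◁ ract) ≫ lact = (α_ A B A).inv ≫ (lact ▷ A) ≫ ract := by
  -- Paired with `a`, both sides send `a' ⊗ y ⊗ a''` to `ε(a'' a a', y)`, bracketed differently.
  unfold LactSpec at hl
  unfold RactSpec at hr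
  apply hε (A ⊗ (B ⊗ A))
  simp only [whiskerLeft_comp, Category.assoc, hl]
  rw [associator_inv_naturality_right_assoc, whisker_exchange_assoc, hr,
    ← whisker_exchange_assoc, associator_inv_naturality_left_assoc,
    ← comp_whiskerRight_assoc]
  rw [← whiskerLeft_comp_assoc (f := lact ▷ A), BraidedCategory.braiding_naturality_left,
    whiskerLeft_comp_assoc, associator_inv_naturality_right_assoc, whisker_exchange_assoc, hl,
    associator_inv_naturality_left_assoc, ← comp_whiskerRight_assoc,
    BraidedCategory.braiding_naturality_left_assoc (f := μ),
    comp_whiskerRight_assoc (f := (β_ A A).hom), hμ]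
  simp only [BraidedCategory.braiding_tensor_left_hom, comp_whiskerRight, whiskerLeft_comp,
    Category.assoc]
  monoidal

theorem frobenius_dual_mul_assoc_general (N : C) {A B : C} (ε : A ⊗ B ⟶ N)
    (μ : A ⊗ A ⟶ A) (l r : A ⟶ B) (lact : A ⊗ B ⟶ B) (ract : B ⊗ A ⟶ B)
    (hF : IsFrobenius N ε μ l r lact ract)
    (ri : B ⟶ A) (hri₂ : ri ≫ r = 𝟙 B)
    (li : B ⟶ A) (hli₂ : li ≫ l = 𝟙 B) :
    (((B ◁ ri) ≫ ract) ▷ B) ≫ ((B ◁ ri) ≫ ract) =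
      (α_ B B B).hom ≫ (B ◁ ((B ◁ ri) ≫ ract)) ≫ ((B ◁ ri) ≫ ract) := by
  obtain ⟨⟨hε, -⟩, hμ, hl, hr, -, -, -, hcontra⟩ := hF
  exact mul_assoc_of_bimodule (lact_ract_comm (fun X => (hε X).injective) hμ hl hr) rfl
    (whiskerLeft_comp_ract_eq_whiskerRight_comp_lact hcontra hri₂ hli₂)

/-- for a Frobenius structure `(A, B, ε, μ, l, r)`, the
multiplication `μ_B := ⊸ʳ ∘ (B ⊗ r⁻¹)` on `B` is associative. -/
theorem frobenius_dual_mul_assoc (N : C) {A B : C} (ε : A ⊗ B ⟶ N)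
    (μ : A ⊗ A ⟶ A) (l r : A ⟶ B) (lact : A ⊗ B ⟶ B) (ract : B ⊗ A ⟶ B)
    (hF : IsFrobenius N ε μ l r lact ract)
    (ri : B ⟶ A) (hri₁ : r ≫ ri = 𝟙 A) (hri₂ : ri ≫ r = 𝟙 B)
    (li : B ⟶ A) (hli₁ : l ≫ li = 𝟙 A) (hli₂ : li ≫ l = 𝟙 B) :
    (((B ◁ ri) ≫ ract) ▷ B) ≫ ((B ◁ ri) ≫ ract) =
      (α_ B B B).hom ≫ (B ◁ ((B ◁ ri) ≫ ract)) ≫ ((B ◁ ri) ≫ ract) :=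
  frobenius_dual_mul_assoc_general N ε μ l r lact ract hF ri hri₂ li hli₂
end

section
/- In a symmetric monoidal closed category with I the monoidal unit, the following are equivalent for an object A: (1) A is nuclear, i.e., the canonical map mix : A* ⊗ A → [A, A] is an isomorphism; (2) there exists η : I → A* ⊗ A such that mix ∘ η equals the transpose of ρ_A (the name of the identity) I → [A, A]; (3) A is dualizable, i.e., part of an adjunction (A, B, η, ε) satisfying the triangle identities. -/
open CategoryTheory MonoidalCategory MonoidalClosed

variable {C : Type*} [Category C] [MonoidalCategory C] [SymmetricCategory C] [MonoidalClosed C]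

/-- The canonical map `mix : A* ⊗ A ⟶ [A, A]`, transpose of
`λ_A ∘ (ev_{A,I} ⊗ A) : A ⊗ (A* ⊗ A) ⟶ A` (modulo associators). -/
noncomputable def mixMap (A : C) : (ihom A).obj (𝟙_ C) ⊗ A ⟶ (ihom A).obj A :=
  MonoidalClosed.curry
    ((α_ A ((ihom A).obj (𝟙_ C)) A).inv ≫ ((ihom.ev A).app (𝟙_ C) ▷ A) ≫ (λ_ A).hom)

omit [SymmetricCategory C] [MonoidalClosed C] in
/-- Auxiliary purely monoidal computation. -/
lemma zig_aux {A As : C} (η : 𝟙_ C ⟶ As ⊗ A) (E : A ⊗ As ⟶ 𝟙_ C)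
    (h1 : A ◁ η ≫ (α_ A As A).inv ≫ E ▷ A = (ρ_ A).hom ≫ (λ_ A).inv) :
    A ◁ ((λ_ As).inv ≫ η ▷ As ≫ (α_ As A As).hom ≫ As ◁ E ≫ (ρ_ As).hom) ≫ E = E := by
  have h1' : A ◁ η ≫ (α_ A As A).inv ≫ E ▷ A ≫ (λ_ A).hom = (ρ_ A).hom := by
    rw [reassoc_of% h1]; simp
  calc A ◁ ((λ_ As).inv ≫ η ▷ As ≫ (α_ As A As).hom ≫ As ◁ E ≫ (ρ_ As).hom) ≫ E
      = 𝟙 (A ⊗ As) ⊗≫ ((A ◁ η) ▷ As) ⊗≫ ((A ⊗ As) ◁ E ≫ E ▷ 𝟙_ C) ⊗≫ 𝟙 (𝟙_ C) := by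
        monoidal
    _ = 𝟙 (A ⊗ As) ⊗≫ ((A ◁ η) ▷ As) ⊗≫ (E ▷ (A ⊗ As) ≫ 𝟙_ C ◁ E) ⊗≫ 𝟙 (𝟙_ C) := by
        rw [whisker_exchange]
    _ = 𝟙 (A ⊗ As) ⊗≫ ((A ◁ η ≫ (α_ A As A).inv ≫ E ▷ A ≫ (λ_ A).hom) ▷ As)
          ⊗≫ E ⊗≫ 𝟙 (𝟙_ C) := by monoidal
    _ = 𝟙 (A ⊗ As) ⊗≫ ((ρ_ A).hom ▷ As) ⊗≫ E ⊗≫ 𝟙 (𝟙_ C) := by rw [h1']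
    _ = E := by monoidal

omit [SymmetricCategory C] in
/-- The second zig-zag identity follows from the first when `B = A*` and `ε = ev`. -/
lemma second_zigzag (A : C) (η : 𝟙_ C ⟶ (ihom A).obj (𝟙_ C) ⊗ A)
    (h1 : (A ◁ η) ≫ (α_ A ((ihom A).obj (𝟙_ C)) A).inv ≫ ((ihom.ev A).app (𝟙_ C) ▷ A)
        = (ρ_ A).hom ≫ (λ_ A).inv) :
    (η ▷ (ihom A).obj (𝟙_ C)) ≫ (α_ ((ihom A).obj (𝟙_ C)) A ((ihom A).obj (𝟙_ C))).hom
        ≫ ((ihom A).obj (𝟙_ C) ◁ (ihom.ev A).app (𝟙_ C))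
      = (λ_ ((ihom A).obj (𝟙_ C))).hom ≫ (ρ_ ((ihom A).obj (𝟙_ C))).inv := by
  have key : (λ_ ((ihom A).obj (𝟙_ C))).inv ≫ η ▷ (ihom A).obj (𝟙_ C)
      ≫ (α_ ((ihom A).obj (𝟙_ C)) A ((ihom A).obj (𝟙_ C))).hom
      ≫ ((ihom A).obj (𝟙_ C) ◁ (ihom.ev A).app (𝟙_ C)) ≫ (ρ_ ((ihom A).obj (𝟙_ C))).hom
      = 𝟙 ((ihom A).obj (𝟙_ C)) := by
    apply uncurry_injective
    rw [uncurry_id_eq_ev, uncurry_eq]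
    exact zig_aux η ((ihom.ev A).app (𝟙_ C)) h1
  calc (η ▷ (ihom A).obj (𝟙_ C)) ≫ (α_ ((ihom A).obj (𝟙_ C)) A ((ihom A).obj (𝟙_ C))).hom
        ≫ ((ihom A).obj (𝟙_ C) ◁ (ihom.ev A).app (𝟙_ C))
      = (λ_ _).hom ≫ ((λ_ _).inv ≫ η ▷ (ihom A).obj (𝟙_ C)
          ≫ (α_ ((ihom A).obj (𝟙_ C)) A ((ihom A).obj (𝟙_ C))).hom
          ≫ ((ihom A).obj (𝟙_ C) ◁ (ihom.ev A).app (𝟙_ C)) ≫ (ρ_ _).hom)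
          ≫ (ρ_ _).inv := by simp
    _ = (λ_ _).hom ≫ (ρ_ _).inv := by rw [key]; simp

/-- An adjunction `(A, B, η, ε)` as an exact pairing. -/
noncomputable def pairing (A B : C) (η : 𝟙_ C ⟶ B ⊗ A) (ε : A ⊗ B ⟶ 𝟙_ C)
    (h1 : (A ◁ η) ≫ (α_ A B A).inv ≫ (ε ▷ A) = (ρ_ A).hom ≫ (λ_ A).inv)
    (h2 : (η ▷ B) ≫ (α_ B A B).hom ≫ (B ◁ ε) = (λ_ B).hom ≫ (ρ_ B).inv) :
    ExactPairing B A where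
  coevaluation' := η
  evaluation' := ε
  coevaluation_evaluation' := h1
  evaluation_coevaluation' := h2

omit [SymmetricCategory C] in
/-- Dualizable implies nuclear. -/
lemma isIso_mix_of_dual (A B : C) (η : 𝟙_ C ⟶ B ⊗ A) (ε : A ⊗ B ⟶ 𝟙_ C)
    (h1 : (A ◁ η) ≫ (α_ A B A).inv ≫ (ε ▷ A) = (ρ_ A).hom ≫ (λ_ A).inv)
    (h2 : (η ▷ B) ≫ (α_ B A B).hom ≫ (B ◁ ε) = (λ_ B).hom ≫ (ρ_ B).inv) :
    IsIso (mixMap A) := by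
  letI : ExactPairing B A := pairing A B η ε h1 h2
  have hε : ε_ B A = ε := rfl
  let φ : ∀ X : C, B ⊗ X ⟶ (ihom A).obj X := fun X =>
    curry ((α_ A B X).inv ≫ (ε ▷ X) ≫ (λ_ X).hom)
  let ψ : ∀ X : C, (ihom A).obj X ⟶ B ⊗ X := fun X =>
    (tensorLeftHomEquiv ((ihom A).obj X) B A X) ((ihom.ev A).app X)
  have hψφ : ∀ X, ψ X ≫ φ X = 𝟙 _ := by
    intro X
    apply uncurry_injective
    rw [uncurry_id_eq_ev, uncurry_natural_left, uncurry_curry]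
    have := (tensorLeftHomEquiv ((ihom A).obj X) B A X).symm_apply_apply ((ihom.ev A).app X)
    simpa [tensorLeftHomEquiv, ψ, hε] using this
  have hφψ : ∀ X, φ X ≫ ψ X = 𝟙 _ := by
    intro X
    apply (tensorLeftHomEquiv (B ⊗ X) B A X).symm.injective
    have e1 : (tensorLeftHomEquiv ((ihom A).obj X) B A X).symm (ψ X) = (ihom.ev A).app X :=
      Equiv.symm_apply_apply _ _
    rw [tensorLeftHomEquiv_symm_naturality, e1, ← uncurry_eq]
    simp [φ, tensorLeftHomEquiv, hε]
  have hce : curry ε = (ρ_ B).inv ≫ φ (𝟙_ C) := by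
    apply uncurry_injective
    rw [uncurry_curry, uncurry_natural_left, uncurry_curry]
    monoidal
  have hmix : (curry ε ▷ A) ≫ mixMap A = φ A := by
    apply uncurry_injective
    simp only [φ, mixMap]
    rw [uncurry_natural_left, uncurry_curry, uncurry_curry,
      associator_inv_naturality_middle_assoc, ← comp_whiskerRight_assoc, ← uncurry_eq,
      uncurry_curry]
  haveI : IsIso (φ A) := ⟨ψ A, hφψ A, hψφ A⟩
  haveI : IsIso (φ (𝟙_ C)) := ⟨ψ (𝟙_ C), hφψ (𝟙_ C), hψφ (𝟙_ C)⟩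
  haveI : IsIso (curry ε) := by rw [hce]; infer_instance
  have hmm : mixMap A = inv (curry ε ▷ A) ≫ φ A := by
    rw [← hmix, IsIso.inv_hom_id_assoc]
  rw [hmm]; infer_instance

omit [SymmetricCategory C] in
/-- The name-of-identity condition implies dualizability (with `B = A*`, `ε = ev`). -/
lemma dual_of_trace (A : C)
    (h : ∃ η : 𝟙_ C ⟶ (ihom A).obj (𝟙_ C) ⊗ A,
        η ≫ mixMap A = MonoidalClosed.curry (ρ_ A).hom) :
    ∃ (B : C) (η : 𝟙_ C ⟶ B ⊗ A) (ε : A ⊗ B ⟶ 𝟙_ C),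
      ((A ◁ η) ≫ (α_ A B A).inv ≫ (ε ▷ A) = (ρ_ A).hom ≫ (λ_ A).inv) ∧
      ((η ▷ B) ≫ (α_ B A B).hom ≫ (B ◁ ε) = (λ_ B).hom ≫ (ρ_ B).inv) := by
  obtain ⟨η, hη⟩ := h
  have hu : uncurry (η ≫ mixMap A) = uncurry (curry (ρ_ A).hom) := congrArg _ hη
  rw [uncurry_natural_left, mixMap, uncurry_curry, uncurry_curry] at hu
  have h1 : (A ◁ η) ≫ (α_ A ((ihom A).obj (𝟙_ C)) A).inv ≫ ((ihom.ev A).app (𝟙_ C) ▷ A)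
      = (ρ_ A).hom ≫ (λ_ A).inv := by
    rw [← hu]; simp
  exact ⟨(ihom A).obj (𝟙_ C), η, (ihom.ev A).app (𝟙_ C), h1, second_zigzag A η h1⟩

/-- the following are equivalent: (1) `A` is nuclear (`mix` is an
isomorphism); (2) there is `η : I ⟶ A* ⊗ A` with `mix ∘ η` the name of the
identity of `A`; (3) `A` is dualizable (part of an adjunction). -/
theorem nuclear_tfae (A : C) :
    (IsIso (mixMap A) ↔
      ∃ η : 𝟙_ C ⟶ (ihom A).obj (𝟙_ C) ⊗ A,
        η ≫ mixMap A = MonoidalClosed.curry (ρ_ A).hom) ∧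
    (IsIso (mixMap A) ↔
      ∃ (B : C) (η : 𝟙_ C ⟶ B ⊗ A) (ε : A ⊗ B ⟶ 𝟙_ C),
        ((A ◁ η) ≫ (α_ A B A).inv ≫ (ε ▷ A) = (ρ_ A).hom ≫ (λ_ A).inv) ∧
        ((η ▷ B) ≫ (α_ B A B).hom ≫ (B ◁ ε) = (λ_ B).hom ≫ (ρ_ B).inv)) := by
  have to2 : IsIso (mixMap A) → ∃ η : 𝟙_ C ⟶ (ihom A).obj (𝟙_ C) ⊗ A,
      η ≫ mixMap A = MonoidalClosed.curry (ρ_ A).hom := fun h =>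
    ⟨MonoidalClosed.curry (ρ_ A).hom ≫ inv (mixMap A), by simp⟩
  have to1 : (∃ (B : C) (η : 𝟙_ C ⟶ B ⊗ A) (ε : A ⊗ B ⟶ 𝟙_ C),
      ((A ◁ η) ≫ (α_ A B A).inv ≫ (ε ▷ A) = (ρ_ A).hom ≫ (λ_ A).inv) ∧
      ((η ▷ B) ≫ (α_ B A B).hom ≫ (B ◁ ε) = (λ_ B).hom ≫ (ρ_ B).inv)) →
      IsIso (mixMap A) := by
    rintro ⟨B, η, ε, h1, h2⟩
    exact isIso_mix_of_dual A B η ε h1 h2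
  exact ⟨⟨to2, fun h => to1 (dual_of_trace A h)⟩,
    ⟨fun h => dual_of_trace A (to2 h), to1⟩⟩
end

section
/- In a symmetric monoidal closed category, if A is dualizable, then one can choose the counit to be evaluation: there exists η : I → A* ⊗ A such that (A, A*, η, ev_{A,I}) is an adjunction; moreover the second triangle identity follows from the first, i.e., if (ev_{A,I} ⊗ A) ∘ (A ⊗ η) = λ_A⁻¹ ∘ ρ_A then (A* ⊗ ev_{A,I}) ∘ (η ⊗ A*) = ρ_{A*}⁻¹ ∘ λ_{A*} automatically holds. -/
open CategoryTheory MonoidalCategory MonoidalClosed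

/-!
Given a duality `(A, B, η, ε)`, the transpose `curry ε : B ⟶ A*` carries `η` to a unit for the
counit `ev`, since `ε` factors as `ev` after `A ◁ curry ε`. For the second triangle identity,
sliding the cap `ε` past itself shows that the first identity makes the zigzag endomorphism of
`B` invisible to `A ◁ - ≫ ε`. When `ε = ev` this operation is uncurrying, which is injective,
so the zigzag is the identity.
-/

section

variable {C : Type*} [Category C] [MonoidalCategory C]

theorem coevaluation_evaluation_comp_whiskerRight {A B B' : C} (η : 𝟙_ C ⟶ B ⊗ A)
    (g : B ⟶ B') (ε : A ⊗ B' ⟶ 𝟙_ C)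
    (h : A ◁ η ≫ (α_ A B A).inv ≫ (A ◁ g ≫ ε) ▷ A = (ρ_ A).hom ≫ (λ_ A).inv) :
    A ◁ (η ≫ g ▷ A) ≫ (α_ A B' A).inv ≫ ε ▷ A = (ρ_ A).hom ≫ (λ_ A).inv := by
  rw [MonoidalCategory.whiskerLeft_comp, Category.assoc, associator_inv_naturality_middle_assoc,
    ← comp_whiskerRight, h]

theorem whiskerLeft_zigzag_comp_of_coevaluation_evaluation {A B : C} (η : 𝟙_ C ⟶ B ⊗ A)
    (ε : A ⊗ B ⟶ 𝟙_ C)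
    (h : A ◁ η ≫ (α_ A B A).inv ≫ ε ▷ A = (ρ_ A).hom ≫ (λ_ A).inv) :
    A ◁ ((λ_ B).inv ≫ η ▷ B ≫ (α_ B A B).hom ≫ B ◁ ε ≫ (ρ_ B).hom) ≫ ε = ε :=
  calc _ = 𝟙 _ ⊗≫ A ◁ η ▷ B ⊗≫ ((A ⊗ B) ◁ ε ≫ ε ▷ 𝟙_ C) ⊗≫ 𝟙 _ := by monoidal
    _ = 𝟙 _ ⊗≫ A ◁ η ▷ B ⊗≫ (ε ▷ (A ⊗ B) ≫ 𝟙_ C ◁ ε) ⊗≫ 𝟙 _ := by rw [whisker_exchange]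
    _ = 𝟙 _ ⊗≫ (A ◁ η ≫ (α_ A B A).inv ≫ ε ▷ A) ▷ B ⊗≫ ε := by monoidal
    _ = ε := by rw [h]; monoidal

variable [MonoidalClosed C]

theorem evaluation_coevaluation_ihom_of_coevaluation_evaluation {A : C}
    (η : 𝟙_ C ⟶ (ihom A).obj (𝟙_ C) ⊗ A)
    (h : A ◁ η ≫ (α_ A _ A).inv ≫ (ihom.ev A).app (𝟙_ C) ▷ A = (ρ_ A).hom ≫ (λ_ A).inv) :
    η ▷ _ ≫ (α_ _ A _).hom ≫ _ ◁ (ihom.ev A).app (𝟙_ C) =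
      (λ_ ((ihom A).obj (𝟙_ C))).hom ≫ (ρ_ _).inv := by
  have zigzag : (λ_ _).inv ≫ η ▷ _ ≫ (α_ _ A _).hom ≫ _ ◁ (ihom.ev A).app (𝟙_ C) ≫ (ρ_ _).hom =
      𝟙 ((ihom A).obj (𝟙_ C)) := uncurry_injective <| by
    rw [uncurry_eq, uncurry_id_eq_ev]
    exact whiskerLeft_zigzag_comp_of_coevaluation_evaluation η _ h
  simpa using (λ_ _).hom ≫= zigzag =≫ (ρ_ _).inv

end

variable {C : Type*} [Category C] [MonoidalCategory C] [SymmetricCategory C] [MonoidalClosed C]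

/-- in a symmetric monoidal closed category, if `A` is dualizable
then the counit can be chosen to be the evaluation `ev_{A,I} : A ⊗ A* ⟶ I`:
there is `η : I ⟶ A* ⊗ A` making `(A, A*, η, ev_{A,I})` an adjunction.
Moreover the second triangle identity follows from the first. -/
theorem dualizable_counit_is_evaluation (A : C)
    (h : ∃ (B : C) (η : 𝟙_ C ⟶ B ⊗ A) (ε : A ⊗ B ⟶ 𝟙_ C),
      ((A ◁ η) ≫ (α_ A B A).inv ≫ (ε ▷ A) = (ρ_ A).hom ≫ (λ_ A).inv) ∧
      ((η ▷ B) ≫ (α_ B A B).hom ≫ (B ◁ ε) = (λ_ B).hom ≫ (ρ_ B).inv)) :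
    (∃ η : 𝟙_ C ⟶ (ihom A).obj (𝟙_ C) ⊗ A,
      ((A ◁ η) ≫ (α_ A ((ihom A).obj (𝟙_ C)) A).inv ≫ ((ihom.ev A).app (𝟙_ C) ▷ A)
          = (ρ_ A).hom ≫ (λ_ A).inv) ∧
      ((η ▷ (ihom A).obj (𝟙_ C)) ≫ (α_ ((ihom A).obj (𝟙_ C)) A ((ihom A).obj (𝟙_ C))).hom
            ≫ ((ihom A).obj (𝟙_ C) ◁ (ihom.ev A).app (𝟙_ C))
          = (λ_ ((ihom A).obj (𝟙_ C))).hom ≫ (ρ_ ((ihom A).obj (𝟙_ C))).inv)) ∧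
    (∀ η : 𝟙_ C ⟶ (ihom A).obj (𝟙_ C) ⊗ A,
      ((A ◁ η) ≫ (α_ A ((ihom A).obj (𝟙_ C)) A).inv ≫ ((ihom.ev A).app (𝟙_ C) ▷ A)
          = (ρ_ A).hom ≫ (λ_ A).inv) →
      ((η ▷ (ihom A).obj (𝟙_ C)) ≫ (α_ ((ihom A).obj (𝟙_ C)) A ((ihom A).obj (𝟙_ C))).hom
            ≫ ((ihom A).obj (𝟙_ C) ◁ (ihom.ev A).app (𝟙_ C))
          = (λ_ ((ihom A).obj (𝟙_ C))).hom ≫ (ρ_ ((ihom A).obj (𝟙_ C))).inv)) := by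
  obtain ⟨B, η, ε, first, -⟩ := h
  have first_ev := coevaluation_evaluation_comp_whiskerRight η (curry ε) ((ihom.ev A).app (𝟙_ C))
    (by rwa [whiskerLeft_curry_ihom_ev_app])
  exact ⟨⟨_, first_ev, evaluation_coevaluation_ihom_of_coevaluation_evaluation _ first_ev⟩,
    fun _ => evaluation_coevaluation_ihom_of_coevaluation_evaluation _⟩
end

section
/- Let A and C be pseudo-affine objects of a symmetric monoidal category (the unit I is a retract of both A and C). If f : A ⊗ B₀ → A ⊗ B₁ and g : B₀ ⊗ C → B₁ ⊗ C satisfy f ⊗ C = A ⊗ g (as maps A ⊗ B₀ ⊗ C → A ⊗ B₁ ⊗ C, modulo associators), then there exists h : B₀ → B₁ such that f = A ⊗ h and g = h ⊗ C. In particular, tensoring with a pseudo-affine object is a faithful functor. -/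
open CategoryTheory MonoidalCategory

/-- identities of pseudo-affine objects are orthogonal: if the
unit is a retract of `A` and of `D`, and `f ⊗ D = A ⊗ g` (modulo associators),
then `f = A ⊗ h` and `g = h ⊗ D` for some `h`.  In particular tensoring with a
pseudo-affine object is faithful. -/
theorem pseudoAffine_orthogonal {C : Type*} [Category C] [MonoidalCategory C]
    [SymmetricCategory C] (A D B₀ B₁ : C)
    (pA : 𝟙_ C ⟶ A) (cA : A ⟶ 𝟙_ C) (hA : pA ≫ cA = 𝟙 (𝟙_ C))
    (pD : 𝟙_ C ⟶ D) (cD : D ⟶ 𝟙_ C) (hD : pD ≫ cD = 𝟙 (𝟙_ C))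
    (f : A ⊗ B₀ ⟶ A ⊗ B₁) (g : B₀ ⊗ D ⟶ B₁ ⊗ D)
    (hfg : f ▷ D = (α_ A B₀ D).hom ≫ (A ◁ g) ≫ (α_ A B₁ D).inv) :
    (∃ h : B₀ ⟶ B₁, f = A ◁ h ∧ g = h ▷ D) ∧
    (∀ (X Y : C) (u v : X ⟶ Y), A ◁ u = A ◁ v → u = v) := by
  have cancelA : ∀ {X Y : C} (u : X ⟶ Y),
      (λ_ X).inv ≫ pA ▷ X ≫ (A ◁ u) ≫ cA ▷ Y ≫ (λ_ Y).hom = u := by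
    intro X Y u
    slice_lhs 2 3 => rw [← whisker_exchange]
    slice_lhs 3 4 => rw [← comp_whiskerRight, hA]
    simp
  have cancelD : ∀ {X Y : C} (u : X ⟶ Y),
      (ρ_ X).inv ≫ X ◁ pD ≫ (u ▷ D) ≫ Y ◁ cD ≫ (ρ_ Y).hom = u := by
    intro X Y u
    slice_lhs 2 3 => rw [whisker_exchange]
    slice_lhs 3 4 => rw [← MonoidalCategory.whiskerLeft_comp, hD]
    simp
  set h : B₀ ⟶ B₁ := (ρ_ B₀).inv ≫ B₀ ◁ pD ≫ g ≫ B₁ ◁ cD ≫ (ρ_ B₁).hom with hh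
  have hf : f = A ◁ h := by
    rw [← cancelD f, hfg, hh]
    simp only [MonoidalCategory.whiskerLeft_comp]
    coherence
  have hg : g = h ▷ D := by
    have h1 : A ◁ g = (α_ A B₀ D).inv ≫ f ▷ D ≫ (α_ A B₁ D).hom := by
      rw [hfg]; simp only [Category.assoc, Iso.inv_hom_id_assoc, Iso.inv_hom_id, Category.comp_id]
    have h2 : A ◁ g = A ◁ (h ▷ D) := by
      rw [h1, hf]
      coherence
    rw [← cancelA g, h2, cancelA]
  refine ⟨⟨h, hf, hg⟩, fun X Y u v huv => ?_⟩
  rw [← cancelA u, huv, cancelA]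
end
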